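/- The Hadamard matrix satisfies the Pease factorization: H_n equals the n-fold product ∏_{k=1}^n ((I_{2^{n-1}} ⊗ DFT_2) · P(C_n)), where P(C_n) is the 2^n × 2^n permutation matrix of the perfect shuffle π(C_n). -/

import Mathlib

open Matrix

/-- Binary representation of `i` as a vector in `F_2^n`, most significant bit first. -/
def bits (n : ℕ) (i : Fin (2 ^ n)) : Fin n → ZMod 2 :=
  fun k => if Nat.testBit i.val (n - 1 - k.val) then 1 else 0

/-- The vector `1_b = (0,...,0,1)ᵀ`. -/
def oneb (n : ℕ) : Fin n → ZMod 2 := fun k => if k.val = n - 1 then 1 else 0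

/-- Permutation matrix `P(Q)` of the linear permutation `π(Q)`:
entry `(j, i)` is `1` iff `j_b = Q i_b`. -/
def permMat (n : ℕ) (Q : Matrix (Fin n) (Fin n) (ZMod 2)) :
    Matrix (Fin (2 ^ n)) (Fin (2 ^ n)) ℤ :=
  Matrix.of fun j i => if bits n j = Q.mulVec (bits n i) then 1 else 0

/-- The array of butterflies `I_{2^{n-1}} ⊗ DFT_2`. -/
def butterflies (n : ℕ) : Matrix (Fin (2 ^ n)) (Fin (2 ^ n)) ℤ :=
  Matrix.of fun j i =>
    if j.val / 2 = i.val / 2 then (if j.val % 2 = 1 ∧ i.val % 2 = 1 then -1 else 1) else 0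

/-- `W(P) = P(P₀)·(I ⊗ DFT₂)·P(P₁) ⋯ (I ⊗ DFT₂)·P(Pₙ)`. -/
def W (n : ℕ) (P : ℕ → Matrix (Fin n) (Fin n) (ZMod 2)) :
    Matrix (Fin (2 ^ n)) (Fin (2 ^ n)) ℤ :=
  permMat n (P 0) * (List.ofFn fun k : Fin n => butterflies n * permMat n (P (k.val + 1))).prod

/-- `P_{i:j} = P_i P_{i+1} ⋯ P_j` (identity if `j < i`). -/
def Pseg {n : ℕ} (P : ℕ → Matrix (Fin n) (Fin n) (ZMod 2)) (i j : ℕ) :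
    Matrix (Fin n) (Fin n) (ZMod 2) :=
  ((List.range (j + 1 - i)).map fun k => P (i + k)).prod

/-- The spreading matrix `X = (P_{0:n-1}1_b | P_{0:n-2}1_b | ⋯ | P_0 1_b)`. -/
def spread (n : ℕ) (P : ℕ → Matrix (Fin n) (Fin n) (ZMod 2)) :
    Matrix (Fin n) (Fin n) (ZMod 2) :=
  Matrix.of fun r c => (Pseg P 0 (n - 1 - c.val)).mulVec (oneb n) r

/-- The matrix whose rows are `(P_{0:n-1}^{-T}1_b)ᵀ, ..., (P_0^{-T}1_b)ᵀ`. -/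
noncomputable def spreadInvRows (n : ℕ) (P : ℕ → Matrix (Fin n) (Fin n) (ZMod 2)) :
    Matrix (Fin n) (Fin n) (ZMod 2) :=
  Matrix.of fun r c => (Pseg P 0 (n - 1 - r.val))⁻¹.transpose.mulVec (oneb n) c

/-- The Hadamard matrix `H_n` with entries `(-1)^{⟨i_b, j_b⟩}`. -/
def hadamardH (n : ℕ) : Matrix (Fin (2 ^ n)) (Fin (2 ^ n)) ℤ :=
  Matrix.of fun i j => (-1) ^ (∑ k, bits n i k * bits n j k).val

/-- The cyclic bit-rotation matrix `C_n`: ones on the superdiagonal and in the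
bottom-left corner. -/
def Cmat (n : ℕ) : Matrix (Fin n) (Fin n) (ZMod 2) :=
  Matrix.of fun k l => if l.val = k.val + 1 ∨ (k.val = n - 1 ∧ l.val = 0) then 1 else 0
/-!
Let `S = (I ⊗ DFT₂) · P(Cₙ)`. In binary, `P(Cₙ)` rotates the bits of an index by one place and
the butterfly then contributes the sign `(-1)^(j₀ c_{n-1})`, so `S^m` has an explicit form: the
`m` lowest bits of the row index have been paired with the `m` highest bits of the column index,
and the remaining bits are only shifted. For `m = 0` this is the identity, and for `m = n` every
bit is paired, which gives the entries `(-1)^⟨j_b, i_b⟩` of `Hₙ`. In the step from `m` to `m + 1`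
the sum defining `S · S^m` has a single nonzero term, the middle index being forced bit by bit.
-/

open Finset

section

variable {n : ℕ}

theorem Fin.testBit_eq_false (i : Fin (2 ^ n)) {t : ℕ} (ht : n ≤ t) : i.val.testBit t = false :=
  Nat.testBit_lt_two_pow (i.isLt.trans_le (Nat.pow_le_pow_right two_pos ht))

theorem Fin.eq_of_testBit_eq {i j : Fin (2 ^ n)}
    (h : ∀ t < n, i.val.testBit t = j.val.testBit t) : i = j := by
  refine Fin.ext (Nat.eq_of_testBit_eq fun t => ?_)
  rcases lt_or_ge t n with ht | ht
  · exact h t ht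
  · rw [i.testBit_eq_false ht, j.testBit_eq_false ht]

theorem exists_fin_testBit_eq (f : ℕ → Bool) :
    ∃ c : Fin (2 ^ n), ∀ t < n, c.val.testBit t = f t :=
  ⟨⟨Nat.ofBits fun t : Fin n => f t, Nat.ofBits_lt_two_pow _⟩,
    fun t ht => Nat.testBit_ofBits_lt _ t ht⟩

theorem bits_apply (i : Fin (2 ^ n)) (k : Fin n) :
    bits n i k = ((i.val.testBit (n - 1 - k)).toNat : ZMod 2) := by
  unfold bits
  cases i.val.testBit (n - 1 - k) <;> rfl

theorem bits_injective : Function.Injective (bits n) := by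
  intro i j h
  refine Fin.eq_of_testBit_eq fun t ht => ?_
  have := congrFun h ⟨n - 1 - t, by omega⟩
  rw [bits_apply, bits_apply, show n - 1 - (n - 1 - t) = t by omega] at this
  cases hi : i.val.testBit t <;> cases hj : j.val.testBit t <;> simp_all

theorem mul_permMat_apply (A : Matrix (Fin (2 ^ n)) (Fin (2 ^ n)) ℤ)
    (Q : Matrix (Fin n) (Fin n) (ZMod 2)) {j c d : Fin (2 ^ n)}
    (hd : bits n d = Q *ᵥ bits n c) : (A * permMat n Q) j c = A j d := by
  rw [mul_apply, sum_eq_single d (fun e _ he => ?_) (by simp)]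
  · simp [permMat, hd]
  · simp only [permMat, of_apply, mul_ite, mul_one, mul_zero]
    exact if_neg fun h => he (bits_injective (h.trans hd.symm))

theorem Cmat_mulVec (v : Fin n → ZMod 2) : Cmat n *ᵥ v = v ∘ finRotate n := by
  funext k
  have hC : ∀ l, Cmat n k l = if finRotate n k = l then 1 else 0 := by
    intro l
    cases n with
    | zero => exact k.elim0
    | succ n =>
      have := l.isLt
      simp only [Cmat, of_apply, Fin.ext_iff, coe_finRotate, Fin.val_last]
      split_ifs <;> first | rfl | omega
  simp [mulVec, dotProduct, hC]

theorem bits_eq_Cmat_mulVec_bits {c d : Fin (2 ^ n)}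
    (h0 : d.val.testBit 0 = c.val.testBit (n - 1))
    (hsucc : ∀ t < n - 1, d.val.testBit (t + 1) = c.val.testBit t) :
    bits n d = Cmat n *ᵥ bits n c := by
  rw [Cmat_mulVec]
  funext k
  cases n with
  | zero => exact k.elim0
  | succ n =>
    simp only [Function.comp_apply, bits_apply]
    rcases eq_or_ne k (Fin.last n) with rfl | hk
    · simp [h0]
    · have hk' : k.val < n := Fin.val_lt_last hk
      rw [coe_finRotate_of_ne_last hk, show n + 1 - 1 - k = (n - 1 - k) + 1 by omega,
        hsucc _ (by omega), show n + 1 - 1 - (k + 1) = n - 1 - k by omega]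

theorem butterflies_apply (j d : Fin (2 ^ n)) : butterflies n j d =
    if ∀ t < n - 1, j.val.testBit (t + 1) = d.val.testBit (t + 1)
    then (-1) ^ ((j.val.testBit 0).toNat * (d.val.testBit 0).toNat) else 0 := by
  have hdiv : j.val / 2 = d.val / 2 ↔
      ∀ t < n - 1, j.val.testBit (t + 1) = d.val.testBit (t + 1) := by
    simp only [Nat.testBit_add_one]
    refine ⟨fun h t _ => by rw [h], fun h => Nat.eq_of_testBit_eq fun t => ?_⟩
    rcases lt_or_ge t (n - 1) with ht | ht
    · exact h t ht
    · rw [← Nat.testBit_add_one, ← Nat.testBit_add_one, j.testBit_eq_false (by omega),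
        d.testBit_eq_false (by omega)]
  simp only [butterflies, of_apply, hdiv, Nat.testBit_zero]
  rcases Nat.mod_two_eq_zero_or_one j.val with hj | hj <;>
    rcases Nat.mod_two_eq_zero_or_one d.val with hd | hd <;> simp [hj, hd]

end

/-- `S^m` for `m ≤ n`, where `S = butterflies n * permMat n (Cmat n)`; bit `0` is the least
significant one. -/
def partialHadamard (n m : ℕ) : Matrix (Fin (2 ^ n)) (Fin (2 ^ n)) ℤ :=
  of fun j i =>
    if ∀ t < n - m, j.val.testBit (t + m) = i.val.testBit t
    then (-1) ^ ∑ t ∈ range m, (j.val.testBit t).toNat * (i.val.testBit (n - m + t)).toNat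
    else 0

section

variable {n : ℕ}

theorem partialHadamard_zero : partialHadamard n 0 = 1 := by
  ext j i
  simp only [partialHadamard, of_apply, one_apply, add_zero, Nat.sub_zero, range_zero, sum_empty,
    pow_zero]
  exact if_congr ⟨Fin.eq_of_testBit_eq, fun h t _ => h ▸ rfl⟩ rfl rfl

theorem partialHadamard_self : partialHadamard n n = hadamardH n := by
  ext j i
  have hdot : ∑ k, bits n j k * bits n i k =
      ((∑ t ∈ range n, (j.val.testBit t).toNat * (i.val.testBit t).toNat : ℕ) : ZMod 2) := by
    push_cast
    rw [← sum_range_reflect, ← Fin.sum_univ_eq_sum_range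
      (fun t => ((j.val.testBit (n - 1 - t)).toNat : ZMod 2) * (i.val.testBit (n - 1 - t)).toNat)]
    simp only [bits_apply]
  simp only [partialHadamard, hadamardH, of_apply, Nat.sub_self, zero_add, hdot, ZMod.val_natCast,
    ← neg_one_pow_eq_pow_mod_two]
  simp

theorem partialHadamard_one_apply_mul_apply_middle {m : ℕ} (hm : m < n) {j c i : Fin (2 ^ n)}
    (hc_low : ∀ t < n - 1, c.val.testBit t = j.val.testBit (t + 1))
    (hc_top : c.val.testBit (n - 1) = i.val.testBit (n - 1 - m)) :
    partialHadamard n 1 j c * partialHadamard n m c i = partialHadamard n (m + 1) j i := by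
  have hcond : (∀ t < n - m, c.val.testBit (t + m) = i.val.testBit t) ↔
      ∀ t < n - (m + 1), j.val.testBit (t + (m + 1)) = i.val.testBit t := by
    refine ⟨fun h t ht => ?_, fun h t ht => ?_⟩
    · rw [← h t (by omega), hc_low _ (by omega), add_assoc]
    · rcases lt_or_ge t (n - (m + 1)) with ht' | ht'
      · rw [hc_low _ (by omega), ← h t ht', add_assoc]
      · obtain rfl : t = n - 1 - m := by omega
        rw [Nat.sub_add_cancel (by omega), hc_top]
  have hsign : (j.val.testBit 0).toNat * (c.val.testBit (n - 1)).toNat +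
      ∑ t ∈ range m, (c.val.testBit t).toNat * (i.val.testBit (n - m + t)).toNat =
      ∑ t ∈ range (m + 1), (j.val.testBit t).toNat * (i.val.testBit (n - (m + 1) + t)).toNat := by
    rw [sum_range_succ', hc_top, add_comm, show n - (m + 1) + 0 = n - 1 - m by omega]
    congr 1
    refine sum_congr rfl fun t ht => ?_
    rw [mem_range] at ht
    rw [hc_low t (by omega), show n - (m + 1) + (t + 1) = n - m + t by omega]
  simp only [partialHadamard, of_apply, sum_range_one, add_zero]
  rw [if_pos fun t ht => (hc_low t ht).symm, if_congr hcond rfl rfl]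
  split_ifs
  · rw [← pow_add, hsign]
  · rw [mul_zero]

theorem partialHadamard_one_apply_mul_apply_eq_zero {m : ℕ} (hm : m < n) {j c d i : Fin (2 ^ n)}
    (hc_low : ∀ t < n - 1, c.val.testBit t = j.val.testBit (t + 1))
    (hc_top : c.val.testBit (n - 1) = i.val.testBit (n - 1 - m)) (hd : d ≠ c) :
    partialHadamard n 1 j d * partialHadamard n m d i = 0 := by
  simp only [partialHadamard, of_apply]
  split_ifs with h1 h2 <;> try simp only [mul_zero, zero_mul]
  refine absurd (Fin.eq_of_testBit_eq fun t ht => ?_) hd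
  rcases lt_or_ge t (n - 1) with ht' | ht'
  · rw [hc_low t ht', h1 t ht']
  · obtain rfl : t = n - 1 := by omega
    rw [hc_top, ← h2 (n - 1 - m) (by omega), Nat.sub_add_cancel (by omega)]

theorem partialHadamard_one_mul {m : ℕ} (hm : m < n) :
    partialHadamard n 1 * partialHadamard n m = partialHadamard n (m + 1) := by
  ext j i
  obtain ⟨c, hc⟩ := exists_fin_testBit_eq (n := n) fun t =>
    if t < n - 1 then j.val.testBit (t + 1) else i.val.testBit (n - 1 - m)
  have hc_low : ∀ t < n - 1, c.val.testBit t = j.val.testBit (t + 1) := fun t ht => by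
    rw [hc t (by omega), if_pos ht]
  have hc_top : c.val.testBit (n - 1) = i.val.testBit (n - 1 - m) := by
    rw [hc _ (by omega), if_neg (by omega)]
  rw [mul_apply, sum_eq_single c
    (fun d _ hd => partialHadamard_one_apply_mul_apply_eq_zero hm hc_low hc_top hd) (by simp),
    partialHadamard_one_apply_mul_apply_middle hm hc_low hc_top]

theorem butterflies_mul_permMat_Cmat (hn : 0 < n) :
    butterflies n * permMat n (Cmat n) = partialHadamard n 1 := by
  ext j c
  obtain ⟨d, hd⟩ := exists_fin_testBit_eq (n := n) fun t =>
    if t = 0 then c.val.testBit (n - 1) else c.val.testBit (t - 1)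
  have hd_zero : d.val.testBit 0 = c.val.testBit (n - 1) := by rw [hd 0 hn, if_pos rfl]
  have hd_succ : ∀ t < n - 1, d.val.testBit (t + 1) = c.val.testBit t := fun t ht => by
    rw [hd _ (by omega), if_neg (by omega), Nat.add_sub_cancel]
  rw [mul_permMat_apply _ _ (bits_eq_Cmat_mulVec_bits hd_zero hd_succ), butterflies_apply]
  simp only [partialHadamard, of_apply, sum_range_one, add_zero, hd_zero]
  exact if_congr (forall₂_congr fun t ht => by rw [hd_succ t ht]) rfl rfl

theorem butterflies_mul_permMat_Cmat_pow {m : ℕ} (hm : m ≤ n) :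
    (butterflies n * permMat n (Cmat n)) ^ m = partialHadamard n m := by
  induction m with
  | zero => rw [pow_zero, partialHadamard_zero]
  | succ m ih =>
    rw [pow_succ', ih (by omega), butterflies_mul_permMat_Cmat (by omega),
      partialHadamard_one_mul (by omega)]

end

/-- Pease factorization: `H_n = ∏_{k=1}^n ((I_{2^{n-1}} ⊗ DFT_2) · P(C_n))`. -/
theorem pease_factorization (n : ℕ) :
    hadamardH n = (List.ofFn fun _ : Fin n => butterflies n * permMat n (Cmat n)).prod := by
  rw [List.ofFn_const, List.prod_replicate, butterflies_mul_permMat_Cmat_pow le_rfl,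
    partialHadamard_self]
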